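/- arXiv:1905.09507 — 4 statements merged into one kernel-verified Lean document; each statement's English description precedes it below -/
import Mathlib

section
/- Let m be a positive integer, τ > 0, d a positive integer, and let v_1, …, v_m be vectors in ℝ^d with M := max_{1≤i≤m} ‖v_i‖. Then for all reals 0 ≤ t' ≤ t'', the averaged and switched integrals differ by at most a quantity proportional to τ: ‖∫_{t'}^{t''} ( (1/m) ∑_{i=1}^m v_i − v_{σ(s,τ)} ) ds‖ ≤ 4 m τ M. Consequently, for every compact interval I ⊂ [0, ∞), the quantity ∫_0^t ( (1/m) ∑_{i=1}^m v_i − v_{σ(s,τ)} ) ds converges to 0 as τ ↓ 0, uniformly in t ∈ I. -/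
open scoped BigOperators
open Filter

/-- The round-robin switching scheme with `m` channels and switching time `τ`:
`σ(t,τ) := 1 + ⌊(t − mτ⌊t/(mτ)⌋)/τ⌋`. -/
noncomputable def roundRobin (m : ℕ) (τ t : ℝ) : ℤ :=
  1 + ⌊(t - (m : ℝ) * τ * (⌊t / ((m : ℝ) * τ)⌋ : ℤ)) / τ⌋

/-!
The deviation `s ↦ c - v_{σ(s,τ)}` from the mean `c` is `mτ`-periodic, bounded by `2M`, and has
zero integral over a period, since each `v_i` is active for time exactly `τ` in every period.
Hence its primitive is `mτ`-periodic as well, so any of its integrals equals one over an interval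
shorter than a period and is at most `2M · mτ`. This bound does not depend on the endpoints,
which gives the uniform convergence as `τ ↓ 0`.
-/

open MeasureTheory

theorem Function.Periodic.norm_intervalIntegral_le {E : Type*} [NormedAddCommGroup E]
    [NormedSpace ℝ E] {f : ℝ → E} {T C : ℝ} (hf : Function.Periodic f T) (hT : 0 < T)
    (hint : ∀ a b, IntervalIntegrable f volume a b) (hzero : ∫ x in 0..T, f x = 0)
    (hC : ∀ x, ‖f x‖ ≤ C) (a b : ℝ) :
    ‖∫ x in a..b, f x‖ ≤ C * T := by
  have hprim : Function.Periodic (fun t => ∫ x in a..t, f x) T := fun t => by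
    simp only [hf.intervalIntegral_add_eq_add a t hint, hf.intervalIntegral_add_eq a 0, zero_add,
      hzero, add_zero]
  obtain ⟨y, hy, hby⟩ := hprim.exists_mem_Ico hT b a
  rw [hby]
  calc ‖∫ x in a..y, f x‖ ≤ C * |y - a| :=
        intervalIntegral.norm_integral_le_of_norm_le_const fun x _ => hC x
    _ ≤ C * T := by
        have hC0 : 0 ≤ C := (norm_nonneg _).trans (hC 0)
        rw [abs_of_nonneg (by linarith [hy.1])]
        exact mul_le_mul_of_nonneg_left (by linarith [hy.2]) hC0

lemma Finset.norm_inv_card_smul_sum_le {ι E : Type*} [SeminormedAddCommGroup E] [NormedSpace ℝ E]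
    {s : Finset ι} (hs : s.Nonempty) {v : ι → E} {M : ℝ} (hM : ∀ i ∈ s, ‖v i‖ ≤ M) :
    ‖(s.card : ℝ)⁻¹ • ∑ i ∈ s, v i‖ ≤ M := by
  have hcard : (0 : ℝ) < s.card := by exact_mod_cast hs.card_pos
  rw [norm_smul, norm_inv, Real.norm_natCast, inv_mul_le_iff₀ hcard]
  calc ‖∑ i ∈ s, v i‖ ≤ ∑ i ∈ s, ‖v i‖ := norm_sum_le _ _
    _ ≤ s.card • M := Finset.sum_le_card_nsmul _ _ _ hM
    _ = s.card * M := nsmul_eq_mul _ _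

namespace roundRobin

variable {m : ℕ} {τ : ℝ}

theorem eq_one_add_floor_mul_fract (hm : m ≠ 0) (t : ℝ) :
    roundRobin m τ t = 1 + ⌊m * Int.fract (t / (m * τ))⌋ := by
  rcases eq_or_ne τ 0 with rfl | hτ
  · simp [roundRobin]
  unfold roundRobin
  congr 2
  rw [Int.fract]
  field_simp

theorem toNat_mem_Icc (hm : 0 < m) (t : ℝ) : (roundRobin m τ t).toNat ∈ Finset.Icc 1 m := by
  have h0 : 0 ≤ (m : ℝ) * Int.fract (t / (m * τ)) :=
    mul_nonneg m.cast_nonneg (Int.fract_nonneg _)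
  have h1 : (m : ℝ) * Int.fract (t / (m * τ)) < m :=
    mul_lt_of_lt_one_right (by exact_mod_cast hm) (Int.fract_lt_one _)
  have := Int.floor_nonneg.mpr h0
  have := Int.floor_lt.mpr h1
  rw [eq_one_add_floor_mul_fract hm.ne', Finset.mem_Icc]
  omega

theorem periodic : Function.Periodic (roundRobin m τ) (m * τ) := by
  rcases eq_or_ne ((m : ℝ) * τ) 0 with h | h
  · simp [h]
  have hm : m ≠ 0 := by rintro rfl; simp at h
  intro t
  simp only [eq_one_add_floor_mul_fract hm, add_div, div_self h, Int.fract_add_one]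

theorem eq_of_mem_Ico (hτ : 0 < τ) {i : ℕ} (hi : i < m) {t : ℝ}
    (ht : t ∈ Set.Ico (i * τ) ((i + 1) * τ)) : roundRobin m τ t = i + 1 := by
  have hm : 0 < m := i.zero_le.trans_lt hi
  have hm' : (0 : ℝ) < m := by exact_mod_cast hm
  have him : (i : ℝ) + 1 ≤ m := by exact_mod_cast hi
  have hfract : Int.fract (t / (m * τ)) = t / (m * τ) := by
    rw [Int.fract_eq_self, le_div_iff₀ (by positivity), div_lt_one (by positivity)]
    constructor <;> nlinarith [ht.1, ht.2]
  have hscale : (m : ℝ) * (t / (m * τ)) = t / τ := by field_simp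
  rw [eq_one_add_floor_mul_fract hm.ne', hfract, hscale, add_comm, add_left_inj, Int.floor_eq_iff,
    le_div_iff₀ hτ, div_lt_iff₀ hτ]
  push_cast
  exact ht

theorem measurable : Measurable (roundRobin m τ) := by
  unfold roundRobin
  fun_prop

variable {E : Type*} [NormedAddCommGroup E]

theorem intervalIntegrable_comp (hm : 0 < m) (v : ℕ → E) (a b : ℝ) :
    IntervalIntegrable (fun t => v (roundRobin m τ t).toNat) volume a b := by
  refine (intervalIntegrable_const (c := ∑ i ∈ Finset.Icc 1 m, ‖v i‖)).mono_fun'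
    ((StronglyMeasurable.of_discrete (f := fun z : ℤ => v z.toNat)).comp_measurable
      measurable).aestronglyMeasurable (ae_of_all _ fun t => ?_)
  exact Finset.single_le_sum (fun i _ => norm_nonneg (v i)) (toNat_mem_Icc hm t)

theorem integral_comp_period [NormedSpace ℝ E] [CompleteSpace E] (hτ : 0 < τ) (v : ℕ → E) :
    ∫ t in 0..m * τ, v (roundRobin m τ t).toNat = τ • ∑ i ∈ Finset.Icc 1 m, v i := by
  have hslot : ∀ i < m,
      ∫ t in i * τ..(i + 1) * τ, v (roundRobin m τ t).toNat = τ • v (i + 1) := by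
    intro i hi
    have hle : (i : ℝ) * τ ≤ (i + 1) * τ := mul_le_mul_of_nonneg_right (by linarith) hτ.le
    rw [intervalIntegral.integral_congr_ae (g := fun _ => v (i + 1)),
      intervalIntegral.integral_const]
    · congr 1; ring
    filter_upwards [Measure.ae_ne volume ((i + 1) * τ)] with t hne ht
    rw [Set.uIoc_of_le hle] at ht
    rw [eq_of_mem_Ico hτ hi ⟨ht.1.le, ht.2.lt_of_ne hne⟩]
    rfl
  have hsum := intervalIntegral.sum_integral_adjacent_intervals (μ := volume)
    (a := fun k : ℕ => k * τ) (n := m) (f := fun t => v (roundRobin m τ t).toNat)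
    fun k hk => intervalIntegrable_comp (k.zero_le.trans_lt hk) v _ _
  push_cast at hsum
  rw [zero_mul] at hsum
  have hreindex : ∑ i ∈ Finset.Icc 1 m, τ • v i = ∑ i ∈ Finset.range m, τ • v (i + 1) := by
    rw [Finset.range_eq_Ico, Finset.sum_Ico_add' (fun i => τ • v i) 0 m 1]
    rfl
  rw [← hsum, Finset.smul_sum, hreindex]
  exact Finset.sum_congr rfl fun i hi => hslot i (Finset.mem_range.mp hi)

end roundRobin

theorem norm_integral_mean_sub_roundRobin_le {E : Type*} [NormedAddCommGroup E] [NormedSpace ℝ E]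
    [CompleteSpace E] {m : ℕ} (hm : 0 < m) {τ : ℝ} (hτ : 0 < τ) (v : ℕ → E) {M : ℝ}
    (hvM : ∀ i ∈ Finset.Icc 1 m, ‖v i‖ ≤ M) (a b : ℝ) :
    ‖∫ s in a..b, ((m : ℝ)⁻¹ • ∑ i ∈ Finset.Icc 1 m, v i - v (roundRobin m τ s).toNat)‖
      ≤ 2 * M * (m * τ) := by
  set c := (m : ℝ)⁻¹ • ∑ i ∈ Finset.Icc 1 m, v i
  have hv : ∀ a b, IntervalIntegrable (fun s => v (roundRobin m τ s).toNat) volume a b :=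
    roundRobin.intervalIntegrable_comp hm v
  have hc : ‖c‖ ≤ M := by
    simpa only [Nat.card_Icc, add_tsub_cancel_right] using
      Finset.norm_inv_card_smul_sum_le (Finset.nonempty_Icc.mpr hm) hvM
  have hzero : ∫ s in 0..m * τ, (c - v (roundRobin m τ s).toNat) = 0 := by
    have hm' : (m : ℝ) ≠ 0 := by exact_mod_cast hm.ne'
    rw [intervalIntegral.integral_sub intervalIntegrable_const (hv _ _),
      intervalIntegral.integral_const, roundRobin.integral_comp_period hτ, sub_zero, smul_smul,
      mul_right_comm, mul_inv_cancel₀ hm', one_mul, sub_self]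
  refine (roundRobin.periodic.comp fun z : ℤ => c - v z.toNat).norm_intervalIntegral_le
    (by positivity) (fun a b => intervalIntegrable_const.sub (hv a b)) hzero (fun s => ?_) a b
  calc ‖c - v (roundRobin m τ s).toNat‖ ≤ ‖c‖ + ‖v (roundRobin m τ s).toNat‖ := norm_sub_le _ _
    _ ≤ 2 * M := by linarith [hvM _ (roundRobin.toNat_mem_Icc (τ := τ) hm s)]

theorem tendstoUniformlyOn_zero_of_norm_le {ι α E : Type*} [SeminormedAddCommGroup E]
    {F : ι → α → E} {g : ι → ℝ} {l : Filter ι} {s : Set α}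
    (hF : ∀ᶠ i in l, ∀ x ∈ s, ‖F i x‖ ≤ g i) (hg : Tendsto g l (nhds 0)) :
    TendstoUniformlyOn F (fun _ => 0) l s := by
  rw [Metric.tendstoUniformlyOn_iff]
  intro ε hε
  filter_upwards [hF, hg.eventually_lt_const hε] with i hFi hgi x hx
  rw [dist_zero_left]
  exact (hFi x hx).trans_lt hgi

theorem stmt3_general (m d : ℕ) (hm : 0 < m)
    (v : ℕ → EuclideanSpace ℝ (Fin d)) (M : ℝ)
    (hM : M = (Finset.Icc 1 m).sup' (Finset.nonempty_Icc.mpr hm) fun i => ‖v i‖) :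
    (∀ τ : ℝ, 0 < τ → ∀ t' t'' : ℝ, 0 ≤ t' → t' ≤ t'' →
      ‖∫ s in t'..t'',
          (((m : ℝ))⁻¹ • ∑ i ∈ Finset.Icc 1 m, v i - v (roundRobin m τ s).toNat)‖
        ≤ 4 * m * τ * M) ∧
    (∀ a b : ℝ, 0 ≤ a →
      TendstoUniformlyOn
        (fun (τ : ℝ) (t : ℝ) => ∫ s in (0 : ℝ)..t,
          (((m : ℝ))⁻¹ • ∑ i ∈ Finset.Icc 1 m, v i - v (roundRobin m τ s).toNat))
        (fun _ => (0 : EuclideanSpace ℝ (Fin d)))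
        (nhdsWithin (0 : ℝ) (Set.Ioi 0)) (Set.Icc a b)) := by
  have hvM : ∀ i ∈ Finset.Icc 1 m, ‖v i‖ ≤ M := fun i hi =>
    hM ▸ Finset.le_sup' (fun i => ‖v i‖) hi
  have hM0 : 0 ≤ M := (norm_nonneg _).trans (hvM 1 (Finset.mem_Icc.mpr ⟨le_rfl, hm⟩))
  have hbound : ∀ τ : ℝ, 0 < τ → ∀ t' t'' : ℝ,
      ‖∫ s in t'..t'', ((m : ℝ)⁻¹ • ∑ i ∈ Finset.Icc 1 m, v i - v (roundRobin m τ s).toNat)‖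
        ≤ 4 * m * τ * M := fun τ hτ t' t'' => by
    have := norm_integral_mean_sub_roundRobin_le hm hτ v hvM t' t''
    linarith [mul_nonneg (mul_nonneg (Nat.cast_nonneg m) hτ.le) hM0]
  refine ⟨fun τ hτ t' t'' _ _ => hbound τ hτ t' t'', fun a b _ => ?_⟩
  refine tendstoUniformlyOn_zero_of_norm_le (g := fun τ => 4 * m * τ * M) ?_ ?_
  · filter_upwards [self_mem_nhdsWithin] with τ hτ t _ using hbound τ hτ 0 t
  · have hcont : Continuous fun τ : ℝ => 4 * m * τ * M := by fun_prop
    simpa using (hcont.tendsto 0).mono_left nhdsWithin_le_nhds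

theorem stmt3 (m d : ℕ) (hm : 0 < m) (hd : 0 < d)
    (v : ℕ → EuclideanSpace ℝ (Fin d)) (M : ℝ)
    (hM : M = (Finset.Icc 1 m).sup' (Finset.nonempty_Icc.mpr hm) fun i => ‖v i‖) :
    (∀ τ : ℝ, 0 < τ → ∀ t' t'' : ℝ, 0 ≤ t' → t' ≤ t'' →
      ‖∫ s in t'..t'',
          (((m : ℝ))⁻¹ • ∑ i ∈ Finset.Icc 1 m, v i - v (roundRobin m τ s).toNat)‖
        ≤ 4 * m * τ * M) ∧
    (∀ a b : ℝ, 0 ≤ a →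
      TendstoUniformlyOn
        (fun (τ : ℝ) (t : ℝ) => ∫ s in (0 : ℝ)..t,
          (((m : ℝ))⁻¹ • ∑ i ∈ Finset.Icc 1 m, v i - v (roundRobin m τ s).toNat))
        (fun _ => (0 : EuclideanSpace ℝ (Fin d)))
        (nhdsWithin (0 : ℝ) (Set.Ioi 0)) (Set.Icc a b)) :=
  stmt3_general m d hm v M hM
end

section
/- Let d be a positive integer, K ≥ 1, λ > 0, T > 0, and γ ≥ 0, with q := K e^{−λT} < 1. Let Φ be a semiflow on ℝ^d satisfying the exponential contraction property ‖Φ(t,a) − Φ(t,b)‖ ≤ K e^{−λt} ‖a − b‖ for all t ≥ 0 and all a, b ∈ ℝ^d. Let t₀ ∈ ℝ and let y : [t₀, ∞) → ℝ^d be a function such that for every natural number n and every t ∈ [t₀ + nT, t₀ + (n+1)T], ‖y(t) − Φ(t − t₀ − nT, y(t₀ + nT))‖ ≤ γ. Then for all t ≥ t₀, ‖y(t) − Φ(t − t₀, y(t₀))‖ ≤ γ (1 + K/(1 − q)). -/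
theorem stmt5 (d : ℕ) (hd : 0 < d) (K lam T γ : ℝ)
    (hK : 1 ≤ K) (hlam : 0 < lam) (hT : 0 < T) (hγ : 0 ≤ γ)
    (hq : K * Real.exp (-lam * T) < 1)
    (Φ : ℝ → EuclideanSpace ℝ (Fin d) → EuclideanSpace ℝ (Fin d))
    (hΦ0 : ∀ x, Φ 0 x = x)
    (hΦflow : ∀ s t : ℝ, 0 ≤ s → 0 ≤ t → ∀ x, Φ t (Φ s x) = Φ (t + s) x)
    (hcontr : ∀ t : ℝ, 0 ≤ t → ∀ a b : EuclideanSpace ℝ (Fin d),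
      ‖Φ t a - Φ t b‖ ≤ K * Real.exp (-lam * t) * ‖a - b‖)
    (t₀ : ℝ) (y : ℝ → EuclideanSpace ℝ (Fin d))
    (hy : ∀ n : ℕ, ∀ t ∈ Set.Icc (t₀ + (n : ℝ) * T) (t₀ + ((n : ℝ) + 1) * T),
      ‖y t - Φ (t - t₀ - (n : ℝ) * T) (y (t₀ + (n : ℝ) * T))‖ ≤ γ) :
    ∀ t : ℝ, t₀ ≤ t →
      ‖y t - Φ (t - t₀) (y t₀)‖ ≤ γ * (1 + K / (1 - K * Real.exp (-lam * T))) := by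
  set q := K * Real.exp (-lam * T) with hqdef
  have hq0 : 0 ≤ q := mul_nonneg (le_trans zero_le_one hK) (Real.exp_pos _).le
  have hq1 : 0 < 1 - q := by linarith
  -- key bound on errors at multiples of T
  have key : ∀ n : ℕ, ‖y (t₀ + (n : ℝ) * T) - Φ ((n : ℝ) * T) (y t₀)‖ ≤ γ / (1 - q) := by
    intro n
    induction n with
    | zero =>
        simp only [Nat.cast_zero, zero_mul, add_zero, hΦ0, sub_self, norm_zero]
        positivity
    | succ n ih =>
        have hnT : (0:ℝ) ≤ (n : ℝ) * T := by positivity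
        have h1 : ‖y (t₀ + ((n:ℝ)+1) * T) - Φ T (y (t₀ + (n:ℝ) * T))‖ ≤ γ := by
          have := hy n (t₀ + ((n:ℝ)+1) * T) ⟨by nlinarith, le_refl _⟩
          have harith : t₀ + ((n:ℝ)+1) * T - t₀ - (n:ℝ) * T = T := by ring
          rwa [harith] at this
        have h2 : Φ (((n:ℝ)+1) * T) (y t₀) = Φ T (Φ ((n:ℝ) * T) (y t₀)) := by
          rw [hΦflow _ _ hnT hT.le]
          congr 1; ring
        have h3 : ‖Φ T (y (t₀ + (n:ℝ) * T)) - Φ T (Φ ((n:ℝ) * T) (y t₀))‖ ≤ q * (γ / (1 - q)) := by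
          calc ‖Φ T (y (t₀ + (n:ℝ) * T)) - Φ T (Φ ((n:ℝ) * T) (y t₀))‖
              ≤ K * Real.exp (-lam * T) * ‖y (t₀ + (n:ℝ) * T) - Φ ((n:ℝ) * T) (y t₀)‖ :=
                hcontr T hT.le _ _
            _ ≤ q * (γ / (1 - q)) := by
                apply mul_le_mul_of_nonneg_left ih hq0
        push_cast
        calc ‖y (t₀ + ((n:ℝ)+1) * T) - Φ (((n:ℝ)+1) * T) (y t₀)‖
            = ‖(y (t₀ + ((n:ℝ)+1) * T) - Φ T (y (t₀ + (n:ℝ) * T)))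
                + (Φ T (y (t₀ + (n:ℝ) * T)) - Φ T (Φ ((n:ℝ) * T) (y t₀)))‖ := by
              rw [h2]; congr 1; abel
          _ ≤ γ + q * (γ / (1 - q)) := le_trans (norm_add_le _ _) (add_le_add h1 h3)
          _ = γ / (1 - q) := by field_simp; ring
  intro t ht
  set n : ℕ := ⌊(t - t₀) / T⌋₊ with hn
  have hst : 0 ≤ t - t₀ := by linarith
  have hfl : (n : ℝ) ≤ (t - t₀) / T := Nat.floor_le (by positivity)
  have hfl2 : (t - t₀) / T < (n : ℝ) + 1 := Nat.lt_floor_add_one _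
  have hlow : t₀ + (n : ℝ) * T ≤ t := by
    have := (le_div_iff₀ hT).mp hfl; linarith
  have hhigh : t ≤ t₀ + ((n : ℝ) + 1) * T := by
    have := (div_lt_iff₀ hT).mp hfl2; linarith
  have hs : 0 ≤ t - t₀ - (n : ℝ) * T := by linarith
  have hnT : (0:ℝ) ≤ (n : ℝ) * T := by positivity
  have h1 := hy n t ⟨hlow, hhigh⟩
  have h2 : Φ (t - t₀) (y t₀) = Φ (t - t₀ - (n:ℝ) * T) (Φ ((n:ℝ) * T) (y t₀)) := by
    rw [hΦflow _ _ hnT hs]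
    congr 1; ring
  have h3 : ‖Φ (t - t₀ - (n:ℝ) * T) (y (t₀ + (n:ℝ) * T))
      - Φ (t - t₀ - (n:ℝ) * T) (Φ ((n:ℝ) * T) (y t₀))‖ ≤ K * (γ / (1 - q)) := by
    calc ‖Φ (t - t₀ - (n:ℝ) * T) (y (t₀ + (n:ℝ) * T))
        - Φ (t - t₀ - (n:ℝ) * T) (Φ ((n:ℝ) * T) (y t₀))‖
        ≤ K * Real.exp (-lam * (t - t₀ - (n:ℝ) * T))
            * ‖y (t₀ + (n:ℝ) * T) - Φ ((n:ℝ) * T) (y t₀)‖ := hcontr _ hs _ _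
      _ ≤ K * 1 * (γ / (1 - q)) := by
          apply mul_le_mul
          · apply mul_le_mul_of_nonneg_left _ (by linarith)
            exact Real.exp_le_one_iff.mpr (by nlinarith)
          · exact key n
          · exact norm_nonneg _
          · nlinarith
      _ = K * (γ / (1 - q)) := by ring
  calc ‖y t - Φ (t - t₀) (y t₀)‖
      = ‖(y t - Φ (t - t₀ - (n:ℝ) * T) (y (t₀ + (n:ℝ) * T)))
          + (Φ (t - t₀ - (n:ℝ) * T) (y (t₀ + (n:ℝ) * T))
            - Φ (t - t₀ - (n:ℝ) * T) (Φ ((n:ℝ) * T) (y t₀)))‖ := by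
        rw [h2]; congr 1; abel
    _ ≤ γ + K * (γ / (1 - q)) := le_trans (norm_add_le _ _) (add_le_add h1 h3)
    _ = γ * (1 + K / (1 - q)) := by field_simp
end

section
/- Let d be a positive integer, K ≥ 1, λ > 0, T > 0, γ ≥ 0, and β ∈ (0,1), with θ := (K/β) e^{−λT} < 1 (hence also K e^{−λT} < β < 1). Let Φ be a semiflow on ℝ^d satisfying the exponential contraction property ‖Φ(t,a) − Φ(t,b)‖ ≤ K e^{−λt} ‖a − b‖ for all t ≥ 0 and all a, b ∈ ℝ^d. Let t₀ ∈ ℝ and let y : [t₀, ∞) → ℝ^d be a function such that for every natural number n and every t ∈ [t₀ + nT, t₀ + (n+1)T], ‖y(t) − Φ(t − t₀ − nT, y(t₀ + nT))‖ ≤ β^n γ. Then for all t ≥ t₀, ‖y(t) − Φ(t − t₀, y(t₀))‖ ≤ (γ/β) (1 + K/(1 − θ)) β^{⌊(t − t₀)/T⌋}. In particular, y(t) − Φ(t − t₀, y(t₀)) → 0 as t → +∞, and if additionally Φ(t, y(t₀)) → 0 as t → +∞ then y(t) → 0 as t → +∞. -/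
open Filter

set_option maxHeartbeats 800000

theorem stmt6 (d : ℕ) (hd : 0 < d) (K lam T γ β : ℝ)
    (hK : 1 ≤ K) (hlam : 0 < lam) (hT : 0 < T) (hγ : 0 ≤ γ)
    (hβ0 : 0 < β) (hβ1 : β < 1)
    (hθ : (K / β) * Real.exp (-lam * T) < 1)
    (Φ : ℝ → EuclideanSpace ℝ (Fin d) → EuclideanSpace ℝ (Fin d))
    (hΦ0 : ∀ x, Φ 0 x = x)
    (hΦflow : ∀ s t : ℝ, 0 ≤ s → 0 ≤ t → ∀ x, Φ t (Φ s x) = Φ (t + s) x)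
    (hcontr : ∀ t : ℝ, 0 ≤ t → ∀ a b : EuclideanSpace ℝ (Fin d),
      ‖Φ t a - Φ t b‖ ≤ K * Real.exp (-lam * t) * ‖a - b‖)
    (t₀ : ℝ) (y : ℝ → EuclideanSpace ℝ (Fin d))
    (hy : ∀ n : ℕ, ∀ t ∈ Set.Icc (t₀ + (n : ℝ) * T) (t₀ + ((n : ℝ) + 1) * T),
      ‖y t - Φ (t - t₀ - (n : ℝ) * T) (y (t₀ + (n : ℝ) * T))‖ ≤ β ^ n * γ) :
    (∀ t : ℝ, t₀ ≤ t →
      ‖y t - Φ (t - t₀) (y t₀)‖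
        ≤ (γ / β) * (1 + K / (1 - (K / β) * Real.exp (-lam * T))) * β ^ ⌊(t - t₀) / T⌋) ∧
    Tendsto (fun t => y t - Φ (t - t₀) (y t₀)) atTop (nhds 0) ∧
    (Tendsto (fun t => Φ (t - t₀) (y t₀)) atTop (nhds 0) →
      Tendsto y atTop (nhds 0)) := by
  have hβne : β ≠ 0 := ne_of_gt hβ0
  have hK0 : (0:ℝ) < K := lt_of_lt_of_le one_pos hK
  set θ : ℝ := K / β * Real.exp (-lam * T) with hθdef
  have hθ0 : 0 ≤ θ := by positivity
  have h1θ : 0 < 1 - θ := by linarith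
  have hKe : K * Real.exp (-lam * T) = θ * β := by
    rw [hθdef]; field_simp
  -- bound on the discrete errors
  have hE : ∀ n : ℕ, ‖y (t₀ + (n:ℝ)*T) - Φ ((n:ℝ)*T) (y t₀)‖ ≤ γ * β^n / (β * (1-θ)) := by
    intro n
    induction n with
    | zero =>
      simp only [Nat.cast_zero, zero_mul, add_zero, hΦ0, sub_self, norm_zero]
      positivity
    | succ n ih =>
      have hy1 := hy n (t₀ + ((n:ℝ)+1)*T) ⟨by nlinarith, le_refl _⟩
      have hs : t₀ + ((n:ℝ)+1)*T - t₀ - (n:ℝ)*T = T := by ring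
      rw [hs] at hy1
      have hc := hcontr T hT.le (y (t₀ + (n:ℝ)*T)) (Φ ((n:ℝ)*T) (y t₀))
      have hflow : Φ T (Φ ((n:ℝ)*T) (y t₀)) = Φ (((n:ℝ)+1)*T) (y t₀) := by
        rw [hΦflow ((n:ℝ)*T) T (by positivity) hT.le]
        ring_nf
      have htri : ‖y (t₀ + ((n:ℝ)+1)*T) - Φ (((n:ℝ)+1)*T) (y t₀)‖
          ≤ ‖y (t₀ + ((n:ℝ)+1)*T) - Φ T (y (t₀ + (n:ℝ)*T))‖
            + ‖Φ T (y (t₀ + (n:ℝ)*T)) - Φ T (Φ ((n:ℝ)*T) (y t₀))‖ := by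
        rw [hflow] at *
        have : y (t₀ + ((n:ℝ)+1)*T) - Φ (((n:ℝ)+1)*T) (y t₀)
            = (y (t₀ + ((n:ℝ)+1)*T) - Φ T (y (t₀ + (n:ℝ)*T)))
              + (Φ T (y (t₀ + (n:ℝ)*T)) - Φ (((n:ℝ)+1)*T) (y t₀)) := by abel
        rw [this]; exact norm_add_le _ _
      have hc2 : ‖Φ T (y (t₀ + (n:ℝ)*T)) - Φ T (Φ ((n:ℝ)*T) (y t₀))‖
          ≤ θ * β * (γ * β^n / (β * (1-θ))) := by
        calc ‖Φ T (y (t₀ + (n:ℝ)*T)) - Φ T (Φ ((n:ℝ)*T) (y t₀))‖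
            ≤ K * Real.exp (-lam * T) * ‖y (t₀ + (n:ℝ)*T) - Φ ((n:ℝ)*T) (y t₀)‖ := hc
          _ ≤ K * Real.exp (-lam * T) * (γ * β^n / (β * (1-θ))) := by
              apply mul_le_mul_of_nonneg_left ih (by positivity)
          _ = θ * β * (γ * β^n / (β * (1-θ))) := by rw [hKe]
      have heq : β^n * γ + θ * β * (γ * β^n / (β * (1-θ))) = γ * β^(n+1) / (β * (1-θ)) := by
        field_simp
        ring
      have hcast : ((n:ℝ)+1) = ((n+1 : ℕ) : ℝ) := by push_cast; ring
      calc ‖y (t₀ + ((n+1:ℕ):ℝ)*T) - Φ (((n+1:ℕ):ℝ)*T) (y t₀)‖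
          = ‖y (t₀ + ((n:ℝ)+1)*T) - Φ (((n:ℝ)+1)*T) (y t₀)‖ := by rw [hcast]
        _ ≤ β^n * γ + θ * β * (γ * β^n / (β * (1-θ))) := by
            exact le_trans htri (add_le_add hy1 hc2)
        _ = γ * β^(n+1) / (β * (1-θ)) := heq
  -- main pointwise bound with ℕ exponent
  have main : ∀ t : ℝ, t₀ ≤ t →
      ‖y t - Φ (t - t₀) (y t₀)‖
        ≤ (γ / β) * (1 + K / (1 - θ)) * β ^ (⌊(t - t₀) / T⌋).toNat := by
    intro t ht
    set n : ℕ := (⌊(t - t₀) / T⌋).toNat with hn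
    have hq0 : (0:ℝ) ≤ (t - t₀) / T := div_nonneg (by linarith) hT.le
    have hfl0 : (0:ℤ) ≤ ⌊(t - t₀) / T⌋ := Int.floor_nonneg.mpr hq0
    have hncast : ((n:ℤ) : ℝ) = ((⌊(t - t₀) / T⌋ : ℤ) : ℝ) := by
      rw [hn, Int.toNat_of_nonneg hfl0]
    have hlow : (n:ℝ) ≤ (t - t₀) / T := by
      have := Int.floor_le ((t - t₀) / T)
      rw [← hncast] at this; exact_mod_cast this
    have hup : (t - t₀) / T < (n:ℝ) + 1 := by
      have := Int.lt_floor_add_one ((t - t₀) / T)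
      rw [← hncast] at this; exact_mod_cast this
    have hlow' : t₀ + (n:ℝ)*T ≤ t := by
      rw [le_div_iff₀ hT] at hlow; linarith
    have hup' : t ≤ t₀ + ((n:ℝ)+1)*T := by
      rw [div_lt_iff₀ hT] at hup; linarith
    have hy1 := hy n t ⟨hlow', hup'⟩
    have hsnn : 0 ≤ t - t₀ - (n:ℝ)*T := by linarith
    have hc := hcontr (t - t₀ - (n:ℝ)*T) hsnn (y (t₀ + (n:ℝ)*T)) (Φ ((n:ℝ)*T) (y t₀))
    have hflow : Φ (t - t₀ - (n:ℝ)*T) (Φ ((n:ℝ)*T) (y t₀)) = Φ (t - t₀) (y t₀) := by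
      rw [hΦflow ((n:ℝ)*T) (t - t₀ - (n:ℝ)*T) (by positivity) hsnn]
      ring_nf
    have hexp : Real.exp (-lam * (t - t₀ - (n:ℝ)*T)) ≤ 1 := by
      rw [Real.exp_le_one_iff]
      nlinarith
    have hc2 : ‖Φ (t - t₀ - (n:ℝ)*T) (y (t₀ + (n:ℝ)*T)) - Φ (t - t₀) (y t₀)‖
        ≤ K * (γ * β^n / (β * (1-θ))) := by
      rw [← hflow]
      calc ‖Φ (t - t₀ - (n:ℝ)*T) (y (t₀ + (n:ℝ)*T)) - Φ (t - t₀ - (n:ℝ)*T) (Φ ((n:ℝ)*T) (y t₀))‖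
          ≤ K * Real.exp (-lam * (t - t₀ - (n:ℝ)*T)) * ‖y (t₀ + (n:ℝ)*T) - Φ ((n:ℝ)*T) (y t₀)‖ := hc
        _ ≤ K * 1 * (γ * β^n / (β * (1-θ))) := by
            apply mul_le_mul (by nlinarith) (hE n) (norm_nonneg _) (by positivity)
        _ = K * (γ * β^n / (β * (1-θ))) := by ring
    have htri : ‖y t - Φ (t - t₀) (y t₀)‖
        ≤ ‖y t - Φ (t - t₀ - (n:ℝ)*T) (y (t₀ + (n:ℝ)*T))‖
          + ‖Φ (t - t₀ - (n:ℝ)*T) (y (t₀ + (n:ℝ)*T)) - Φ (t - t₀) (y t₀)‖ := by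
      have : y t - Φ (t - t₀) (y t₀)
          = (y t - Φ (t - t₀ - (n:ℝ)*T) (y (t₀ + (n:ℝ)*T)))
            + (Φ (t - t₀ - (n:ℝ)*T) (y (t₀ + (n:ℝ)*T)) - Φ (t - t₀) (y t₀)) := by abel
      rw [this]; exact norm_add_le _ _
    have hfinal : β^n * γ + K * (γ * β^n / (β * (1-θ)))
        ≤ (γ / β) * (1 + K / (1 - θ)) * β ^ n := by
      have hbn : (0:ℝ) < β^n := pow_pos hβ0 n
      have heq : (γ / β) * (1 + K / (1 - θ)) * β ^ n
          = γ * β^n / β + K * (γ * β^n / (β * (1-θ))) := by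
        field_simp
      rw [heq]
      have : β^n * γ ≤ γ * β^n / β := by
        rw [le_div_iff₀ hβ0]; nlinarith [mul_nonneg hγ hbn.le]
      linarith
    exact le_trans (le_trans htri (add_le_add hy1 hc2)) hfinal
  have hzpow : ∀ t : ℝ, t₀ ≤ t →
      β ^ ⌊(t - t₀) / T⌋ = β ^ (⌊(t - t₀) / T⌋).toNat := by
    intro t ht
    have hfl0 : (0:ℤ) ≤ ⌊(t - t₀) / T⌋ :=
      Int.floor_nonneg.mpr (div_nonneg (by linarith) hT.le)
    rw [← zpow_natCast β (⌊(t - t₀) / T⌋).toNat, Int.toNat_of_nonneg hfl0]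
  constructor
  · intro t ht
    rw [hzpow t ht]
    exact main t ht
  have hC : 0 ≤ (γ / β) * (1 + K / (1 - θ)) := by positivity
  have hn_t : Tendsto (fun t : ℝ => (⌊(t - t₀) / T⌋).toNat) atTop atTop := by
    rw [tendsto_atTop_atTop]
    intro b
    refine ⟨t₀ + ((b:ℝ)+1) * T, fun a ha => ?_⟩
    have hb : ((b:ℝ)) ≤ (a - t₀) / T := by
      rw [le_div_iff₀ hT]
      nlinarith [hT]
    have hb2 : (b:ℤ) ≤ ⌊(a - t₀) / T⌋ := Int.le_floor.mpr (by exact_mod_cast hb)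
    omega
  have hseq : Tendsto (fun n : ℕ => (γ / β) * (1 + K / (1 - θ)) * β ^ n) atTop (nhds 0) := by
    have := (tendsto_pow_atTop_nhds_zero_of_lt_one hβ0.le hβ1).const_mul
      ((γ / β) * (1 + K / (1 - θ)))
    simpa using this
  have hg := hseq.comp hn_t
  have h0 : Tendsto (fun t => y t - Φ (t - t₀) (y t₀)) atTop (nhds 0) := by
    rw [tendsto_zero_iff_norm_tendsto_zero]
    apply squeeze_zero' (Eventually.of_forall fun t => norm_nonneg _) ?_ hg
    filter_upwards [eventually_ge_atTop t₀] with t ht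
    exact main t ht
  refine ⟨h0, fun hΦt => ?_⟩
  have := h0.add hΦt
  simpa using this
end

section
/- Let d be a positive integer, A ⊆ ℝ^d an open set, F : A → ℝ^d continuous, and V : A → ℝ continuously differentiable. Let θ̃ < θ be reals and c > 0 be such that ⟨∇V(x), F(x)⟩ ≤ 0 for all x ∈ A with V(x) ≤ θ, and ⟨∇V(x), F(x)⟩ ≤ −c for all x ∈ A with θ̃ ≤ V(x) ≤ θ. Let t₀ ∈ ℝ and let x : [t₀, ∞) → A be continuously differentiable with x'(t) = F(x(t)) for all t ≥ t₀ and V(x(t₀)) ≤ θ. Then V(x(t)) ≤ θ̃ for all t ≥ t₀ + (θ − θ̃)/c; i.e., the trajectory enters the sublevel set {x ∈ A : V(x) ≤ θ̃} within time (θ − θ̃)/c and remains in it thereafter. -/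
/-!
Along the trajectory, `g t = V (x t)` satisfies `g' t = ⟪∇V (x t), F (x t)⟫`, which is `≤ -c`
whenever `θ̃ ≤ g t ≤ θ`. Since `g` decreases strictly whenever it touches the level `θ` or the
level `θ̃`, neither level can be crossed upwards; and as long as `g` stays above `θ̃` it loses at
least `c` per unit time, so it falls below `θ̃` within time `(θ - θ̃) / c`.
-/

open Set

lemma HasGradientAt.hasDerivAt_comp {E : Type*} [NormedAddCommGroup E] [InnerProductSpace ℝ E]
    [CompleteSpace E] {V : E → ℝ} {v : E} {x : ℝ → E} {x' : E} {t : ℝ}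
    (hV : HasGradientAt V v (x t)) (hx : HasDerivAt x x' t) :
    HasDerivAt (fun s => V (x s)) (inner ℝ v x') t :=
  hV.hasFDerivAt.comp_hasDerivAt t hx

section LevelCrossing

variable {g g' : ℝ → ℝ} {a : ℝ}

lemma le_of_hasDerivAt_neg_of_eq {L : ℝ} (hg : ∀ t, a ≤ t → HasDerivAt g (g' t) t)
    (hL : ∀ t, a ≤ t → g t = L → g' t < 0) (ha : g a ≤ L) :
    ∀ t, a ≤ t → g t ≤ L := by
  intro t hat
  exact image_le_of_deriv_right_lt_deriv_boundary (B := fun _ => L) (B' := 0)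
    (fun s hs => (hg s hs.1).continuousAt.continuousWithinAt)
    (fun s hs => (hg s hs.1).hasDerivWithinAt) ha (fun _ => hasDerivAt_const _ _)
    (fun s hs => hL s hs.1) ⟨hat, le_rfl⟩

lemma exists_mem_Icc_le_of_hasDerivAt_le_neg {b L c : ℝ} (hab : a ≤ b)
    (hg : ∀ t ∈ Icc a b, HasDerivAt g (g' t) t) (hg' : ∀ t ∈ Icc a b, L < g t → g' t ≤ -c)
    (hb : g a - c * (b - a) ≤ L) : ∃ t ∈ Icc a b, g t ≤ L := by
  by_contra! habove
  have hfall : g b ≤ g a - c * (b - a) :=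
    image_le_of_deriv_right_le_deriv_boundary (B := fun t => g a - c * (t - a)) (B' := fun _ => -c)
      (fun s hs => (hg s hs).continuousAt.continuousWithinAt)
      (fun s hs => (hg s (Ico_subset_Icc_self hs)).hasDerivWithinAt) (by simp)
      (by fun_prop)
      (fun s _ => by simpa using ((hasDerivAt_id s).sub_const a).const_mul c |>.const_sub (g a)
        |>.hasDerivWithinAt)
      (fun s hs => hg' s (Ico_subset_Icc_self hs) (habove s (Ico_subset_Icc_self hs)))
      ⟨hab, le_rfl⟩
  exact (habove b ⟨hab, le_rfl⟩).not_ge (hfall.trans hb)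

theorem le_of_hasDerivAt_le_neg_on_band {L M c : ℝ} (hLM : L ≤ M) (hc : 0 < c)
    (hg : ∀ t, a ≤ t → HasDerivAt g (g' t) t)
    (hg' : ∀ t, a ≤ t → L ≤ g t → g t ≤ M → g' t ≤ -c) (ha : g a ≤ M) :
    ∀ t, a + (M - L) / c ≤ t → g t ≤ L := by
  have hT : a ≤ a + (M - L) / c := le_add_of_nonneg_right (div_nonneg (sub_nonneg.2 hLM) hc.le)
  have hM : ∀ t, a ≤ t → g t ≤ M :=
    le_of_hasDerivAt_neg_of_eq hg
      (fun t ht hgt => (hg' t ht (hgt ▸ hLM) hgt.le).trans_lt (neg_neg_of_pos hc)) ha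
  obtain ⟨t₁, ⟨hat₁, ht₁⟩, hgt₁⟩ :=
    exists_mem_Icc_le_of_hasDerivAt_le_neg hT (fun t ht => hg t ht.1)
      (fun t ht hgt => hg' t ht.1 hgt.le (hM t ht.1))
      (by rw [add_sub_cancel_left, mul_div_cancel₀ _ hc.ne']; linarith)
  have hL : ∀ t, t₁ ≤ t → g t ≤ L :=
    le_of_hasDerivAt_neg_of_eq (fun t ht => hg t (hat₁.trans ht))
      (fun t ht hgt => (hg' t (hat₁.trans ht) hgt.ge (hM t (hat₁.trans ht))).trans_lt
        (neg_neg_of_pos hc)) hgt₁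
  exact fun t ht => hL t (ht₁.trans ht)

end LevelCrossing

theorem stmt7_general (d : ℕ) (A : Set (EuclideanSpace ℝ (Fin d))) (hA : IsOpen A)
    (F : EuclideanSpace ℝ (Fin d) → EuclideanSpace ℝ (Fin d))
    (V : EuclideanSpace ℝ (Fin d) → ℝ) (hV : ContDiffOn ℝ 1 V A)
    (θt θ c : ℝ) (hθ : θt < θ) (hc : 0 < c)
    (hdec' : ∀ p ∈ A, θt ≤ V p → V p ≤ θ → (inner ℝ (gradient V p) (F p) : ℝ) ≤ -c)
    (t₀ : ℝ) (x : ℝ → EuclideanSpace ℝ (Fin d))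
    (hxA : ∀ t, t₀ ≤ t → x t ∈ A)
    (hx' : ∀ t, t₀ ≤ t → HasDerivAt x (F (x t)) t)
    (hx0 : V (x t₀) ≤ θ) :
    ∀ t : ℝ, t₀ + (θ - θt) / c ≤ t → V (x t) ≤ θt := by
  have hVx : ∀ t, t₀ ≤ t →
      HasDerivAt (fun s => V (x s)) (inner ℝ (gradient V (x t)) (F (x t))) t := fun t ht =>
    ((hV.contDiffAt (hA.mem_nhds (hxA t ht))).differentiableAt one_ne_zero).hasGradientAt
      |>.hasDerivAt_comp (hx' t ht)
  exact le_of_hasDerivAt_le_neg_on_band hθ.le hc hVx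
    (fun t ht => hdec' (x t) (hxA t ht)) hx0

theorem stmt7 (d : ℕ) (hd : 0 < d) (A : Set (EuclideanSpace ℝ (Fin d))) (hA : IsOpen A)
    (F : EuclideanSpace ℝ (Fin d) → EuclideanSpace ℝ (Fin d)) (hF : ContinuousOn F A)
    (V : EuclideanSpace ℝ (Fin d) → ℝ) (hV : ContDiffOn ℝ 1 V A)
    (θt θ c : ℝ) (hθ : θt < θ) (hc : 0 < c)
    (hdec : ∀ p ∈ A, V p ≤ θ → (inner ℝ (gradient V p) (F p) : ℝ) ≤ 0)
    (hdec' : ∀ p ∈ A, θt ≤ V p → V p ≤ θ → (inner ℝ (gradient V p) (F p) : ℝ) ≤ -c)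
    (t₀ : ℝ) (x : ℝ → EuclideanSpace ℝ (Fin d))
    (hxA : ∀ t, t₀ ≤ t → x t ∈ A)
    (hx' : ∀ t, t₀ ≤ t → HasDerivAt x (F (x t)) t)
    (hx0 : V (x t₀) ≤ θ) :
    ∀ t : ℝ, t₀ + (θ - θt) / c ≤ t → V (x t) ≤ θt :=
  stmt7_general d A hA F V hV θt θ c hθ hc hdec' t₀ x hxA hx' hx0
end
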